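/- If $A$ is an $f$-algebra with the factorization property and separating order dual, then every $f$-orthomorphism on $A^\sim$ is an orthomorphism: if $T \in L_b(A^\sim)$ satisfies $R(Tf) \subseteq R(f)$ for all $f \in A^\sim$, then $T$ is band preserving, i.e., $f \perp g$ implies $Tf \perp g$. -/

import Mathlib

/-!
Evaluation at `1` is an order continuous functional on `A^∼`, i.e. an element `E` of
`(A^∼)^∼_n`, and `E ⋅ h = h`. Hence `T f = E ⋅ T f ∈ R(T f) ⊆ R(f)`, say `T f = G ⋅ f`, and
`|T f| ≤ |G| ⋅ |f|`; so it suffices that `F ⋅ f ⊥ g` whenever `F ≥ 0` and `f, g ≥ 0` are disjoint.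
For `a ≥ 0`, the Riesz–Kantorovich formula for `f ⊓ g = 0` yields a decreasing sequence `c k`
in `[0, a]` with `g (a - c k)` uniformly small and `f (c k * a) → 0`; the last condition forces
`c k ⋅ f ↓ 0` in `A^∼`, so by order continuity `F (c k ⋅ f)` becomes small too, and
`(F ⋅ f ⊓ g)(a) ≤ F (c k ⋅ f) + g (a - c k)`.
-/

noncomputable section

/-- Riesz space (real vector lattice) axioms, as a `Prop`-valued class. -/
class RieszSp (E : Type*) [AddCommGroup E] [Lattice E] [Module ℝ E] : Prop where
  add_le_add_left : ∀ a b : E, a ≤ b → ∀ c : E, c + a ≤ c + b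
  smul_nonneg : ∀ (r : ℝ) (a : E), 0 ≤ r → 0 ≤ a → 0 ≤ r • a

/-- Archimedean (real) f-algebra axioms, as a `Prop`-valued class. -/
class FAlg (A : Type*) [CommRing A] [Lattice A] [Module ℝ A] extends RieszSp A : Prop where
  mul_nonneg : ∀ a b : A, 0 ≤ a → 0 ≤ b → 0 ≤ a * b
  disjoint_mul : ∀ a b c : A, a ⊓ b = 0 → 0 ≤ c → (c * a) ⊓ b = 0
  archimedean : ∀ a b : A, (∀ n : ℕ, (n : ℝ) • a ≤ b) → a ≤ 0

/-- A linear functional is order bounded if it is bounded on order intervals. -/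
def OrderBddFn {E : Type*} [AddCommGroup E] [Lattice E] [Module ℝ E]
    (φ : E →ₗ[ℝ] ℝ) : Prop :=
  ∀ a b : E, ∃ M : ℝ, ∀ x : E, a ≤ x → x ≤ b → |φ x| ≤ M

/-- A linear functional is order continuous if it sends downward directed sets with
infimum `0` to nets converging to `0`. -/
def OrdContFn {E : Type*} [AddCommGroup E] [Lattice E] [Module ℝ E]
    (φ : E →ₗ[ℝ] ℝ) : Prop :=
  ∀ s : Set E, s.Nonempty → DirectedOn (· ≥ ·) s → IsGLB s 0 →
    ∀ ε : ℝ, 0 < ε → ∃ d ∈ s, ∀ d' ∈ s, d' ≤ d → |φ d'| < ε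

/-- The data realizing `D` as the order dual `A^∼` of the f-algebra `A` (with separating
order dual) and `N` as the order continuous part `(A^∼)^∼_n` of the order bidual of `A`,
together with the Arens multiplication and its actions. -/
class DualSetting (A : Type*) [CommRing A] [Lattice A] [Module ℝ A]
    (D : Type*) [AddCommGroup D] [Lattice D] [Module ℝ D]
    (N : Type*) [CommRing N] [Lattice N] [Module ℝ N] where
  dual : D →ₗ[ℝ] A →ₗ[ℝ] ℝ
  bidual : N →ₗ[ℝ] D →ₗ[ℝ] ℝ
  dual_inj : Function.Injective dual
  bidual_inj : Function.Injective bidual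
  dual_bdd : ∀ d : D, OrderBddFn (dual d)
  dual_surj : ∀ φ : A →ₗ[ℝ] ℝ, OrderBddFn φ → ∃ d : D, dual d = φ
  dual_order : ∀ d : D, 0 ≤ d ↔ ∀ a : A, 0 ≤ a → 0 ≤ dual d a
  bidual_bdd : ∀ F : N, OrderBddFn (bidual F)
  bidual_cont : ∀ F : N, OrdContFn (bidual F)
  bidual_surj : ∀ Φ : D →ₗ[ℝ] ℝ, OrderBddFn Φ → OrdContFn Φ → ∃ F : N, bidual F = Φ
  bidual_order : ∀ F : N, 0 ≤ F ↔ ∀ d : D, 0 ≤ d → 0 ≤ bidual F d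
  separating : ∀ a : A, (∀ d : D, dual d a = 0) → a = 0
  /-- the action `f ⋅ a` of `A` on `A^∼`:  `(f ⋅ a)(b) = f (a b)` -/
  dsmul : A → D → D
  dsmul_eval : ∀ (a : A) (f : D) (b : A), dual (dsmul a f) b = dual f (a * b)
  /-- the action `F ⋅ f` of `(A^∼)^∼_n` on `A^∼`:  `(F ⋅ f)(a) = F (f ⋅ a)` -/
  nsmul : N → D → D
  nsmul_eval : ∀ (F : N) (f : D) (a : A), dual (nsmul F f) a = bidual F (dsmul a f)
  /-- the Arens product on `(A^∼)^∼_n`:  `(F * G)(f) = F (G ⋅ f)` -/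
  mul_eval : ∀ (F G : N) (f : D), bidual (F * G) f = bidual F (nsmul G f)

instance (priority := 100) RieszSp.toIsOrderedAddMonoid {E : Type*} [AddCommGroup E] [Lattice E]
    [Module ℝ E] [RieszSp E] : IsOrderedAddMonoid E where
  add_le_add_left a b h c := by simpa only [add_comm _ c] using RieszSp.add_le_add_left a b h c

theorem posPart_sub_eq_of_inf_eq_zero {α : Type*} [Lattice α] [AddCommGroup α] [AddLeftMono α]
    {a b : α} (h : a ⊓ b = 0) : (a - b)⁺ = a :=
  (eq_of_sub_eq_zero (h ▸ inf_eq_sub_posPart_sub a b).symm).symm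

theorem AddMonoidHom.map_eq_mul_of_monotone (g : ℝ →+ ℝ) (hg : Monotone g) (r : ℝ) :
    g r = r * g 1 := by
  have hrat (q : ℚ) : g q = q * g 1 := by simpa using map_ratCast_smul g ℝ ℝ q 1
  have hup (q : ℚ) (hq : r < q) : g r ≤ q * g 1 := (hg hq.le).trans (hrat q).le
  have hlow (q : ℚ) (hq : (q : ℝ) < r) : q * g 1 ≤ g r := (hrat q).ge.trans (hg hq.le)
  rcases (show 0 ≤ g 1 by simpa using hg zero_le_one).eq_or_lt with h0 | hpos
  · obtain ⟨q₁, hq₁⟩ := exists_rat_lt r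
    obtain ⟨q₂, hq₂⟩ := exists_rat_gt r
    have h₁ := hlow q₁ hq₁
    have h₂ := hup q₂ hq₂
    simp only [← h0, mul_zero] at h₁ h₂ ⊢
    exact le_antisymm h₂ h₁
  · refine (div_eq_iff hpos.ne').1 (le_antisymm ?_ ?_)
    · exact le_of_forall_lt_rat_imp_le fun q hq => (div_le_iff₀ hpos).2 (hup q hq)
    · exact le_of_forall_rat_lt_imp_le fun q hq => (le_div_iff₀ hpos).2 (hlow q hq)

section RieszSpace

variable {E : Type*} [AddCommGroup E] [Lattice E] [Module ℝ E]

theorem orderBddFn_of_monotone {φ : E →ₗ[ℝ] ℝ} (hφ : Monotone φ) : OrderBddFn φ := fun a b =>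
  ⟨|φ a| + |φ b|, fun x hax hxb => abs_le.2
    ⟨by linarith [hφ hax, neg_abs_le (φ a), abs_nonneg (φ b)],
      by linarith [hφ hxb, le_abs_self (φ b), abs_nonneg (φ a)]⟩⟩

variable [RieszSp E]

theorem AddMonoidHom.map_smul_of_monotone (φ : E →+ ℝ) (hφ : Monotone φ) (r : ℝ) (x : E) :
    φ (r • x) = r * φ x := by
  have hcone (y : E) (hy : 0 ≤ y) : φ (r • y) = r * φ y := by
    let g : ℝ →+ ℝ := φ.comp (LinearMap.toSpanSingleton ℝ E y).toAddMonoidHom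
    have hg : Monotone g := fun s t hst => hφ (show s • y ≤ t • y from sub_nonneg.1 <| by
      simpa only [sub_smul] using RieszSp.smul_nonneg (t - s) y (sub_nonneg.2 hst) hy)
    simpa [g] using g.map_eq_mul_of_monotone hg r
  rw [← posPart_sub_negPart x, smul_sub, map_sub, map_sub, hcone _ (posPart_nonneg x),
    hcone _ (negPart_nonneg x), mul_sub]

/-- Kantorovich: the extension is `x ↦ p x⁺ - p x⁻`, and it is `ℝ`-linear because it is
monotone. -/
theorem exists_monotone_linearMap_eq_of_additive (p : E → ℝ)
    (hadd : ∀ x y, 0 ≤ x → 0 ≤ y → p (x + y) = p x + p y) (hpos : ∀ x, 0 ≤ x → 0 ≤ p x) :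
    ∃ φ : E →ₗ[ℝ] ℝ, Monotone φ ∧ ∀ x, 0 ≤ x → φ x = p x := by
  have hp0 : p 0 = 0 := by simpa using hadd 0 0 le_rfl le_rfl
  have hval (x : E) (hx : 0 ≤ x) : p x⁺ - p x⁻ = p x := by
    rw [posPart_of_nonneg hx, negPart_of_nonneg hx, hp0, sub_zero]
  let ψ : E →+ ℝ := AddMonoidHom.mk' (fun x => p x⁺ - p x⁻) fun x y => by
    have key : (x + y)⁺ + (x⁻ + y⁻) = (x + y)⁻ + (x⁺ + y⁺) := by
      rw [← sub_eq_zero]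
      calc _ = ((x + y)⁺ - (x + y)⁻) - (x⁺ - x⁻) - (y⁺ - y⁻) := by abel
        _ = 0 := by simp only [posPart_sub_negPart]; abel
    have := congrArg p key
    rw [hadd _ _ (posPart_nonneg _) (add_nonneg (negPart_nonneg x) (negPart_nonneg y)),
      hadd _ _ (negPart_nonneg x) (negPart_nonneg y),
      hadd _ _ (negPart_nonneg _) (add_nonneg (posPart_nonneg x) (posPart_nonneg y)),
      hadd _ _ (posPart_nonneg x) (posPart_nonneg y)] at this
    linarith
  have hψ : Monotone ψ := (monotone_iff_map_nonneg ψ).2 fun x hx => by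
    change 0 ≤ p x⁺ - p x⁻
    rw [hval x hx]
    exact hpos x hx
  exact ⟨{ ψ with map_smul' := ψ.map_smul_of_monotone hψ }, hψ, hval⟩

end RieszSpace

namespace FAlg

variable {A : Type*} [CommRing A] [Lattice A] [Module ℝ A] [FAlg A]

theorem mul_eq_zero_of_inf_eq_zero {u v : A} (hu : 0 ≤ u) (hv : 0 ≤ v) (h : u ⊓ v = 0) :
    u * v = 0 := by
  have h₁ : v ⊓ (u * v) = 0 := by
    rw [inf_comm, mul_comm]
    exact FAlg.disjoint_mul u v v h hv
  simpa only [inf_idem] using FAlg.disjoint_mul v (u * v) u h₁ hu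

protected theorem zero_le_one : (0 : A) ≤ 1 := by
  have h₁ : (1 : A)⁻ * 1⁺ = 0 := mul_eq_zero_of_inf_eq_zero (negPart_nonneg 1) (posPart_nonneg 1)
    (by rw [inf_comm, posPart_inf_negPart_eq_zero])
  have h₂ : (1 : A)⁻ * 1⁻ = -1⁻ := by
    linear_combination h₁ - (1 : A)⁻ * posPart_sub_negPart (1 : A)
  have hsq : 0 ≤ (1 : A)⁻ * 1⁻ := FAlg.mul_nonneg _ _ (negPart_nonneg 1) (negPart_nonneg 1)
  rw [h₂, neg_nonneg] at hsq
  exact negPart_eq_zero.1 (le_antisymm hsq (negPart_nonneg 1))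

instance (priority := 100) toIsOrderedRing : IsOrderedRing A where
  zero_le_one := FAlg.zero_le_one
  mul_le_mul_of_nonneg_left a ha b c hbc := sub_nonneg.1 <| by
    simpa only [mul_sub] using FAlg.mul_nonneg a (c - b) ha (sub_nonneg.2 hbc)
  mul_le_mul_of_nonneg_right a ha b c hbc := sub_nonneg.1 <| by
    simpa only [sub_mul] using FAlg.mul_nonneg (c - b) a (sub_nonneg.2 hbc) ha

theorem mul_posPart {x : A} (hx : 0 ≤ x) (u : A) : x * u⁺ = (x * u)⁺ := by
  have h₁ : (x * u⁺) ⊓ u⁻ = 0 := FAlg.disjoint_mul _ _ x (posPart_inf_negPart_eq_zero u) hx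
  have h₂ : (x * u⁻) ⊓ (x * u⁺) = 0 := FAlg.disjoint_mul _ _ x (by rwa [inf_comm]) hx
  calc x * u⁺ = (x * u⁺ - x * u⁻)⁺ := (posPart_sub_eq_of_inf_eq_zero (by rwa [inf_comm])).symm
    _ = (x * u)⁺ := by rw [← mul_sub, posPart_sub_negPart]

theorem mul_posPart_sub_le_mul_self {m y : A} (hm : 0 ≤ m) (hy : 0 ≤ y) :
    m * (y - m)⁺ ≤ y * y := by
  have h₁ : (y - m)⁻ * (y - m)⁺ = 0 := mul_eq_zero_of_inf_eq_zero (negPart_nonneg _)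
    (posPart_nonneg _) (by rw [inf_comm, posPart_inf_negPart_eq_zero])
  have h₂ : (y - m) * (y - m)⁺ = (y - m)⁺ * (y - m)⁺ := by
    calc (y - m) * (y - m)⁺ = ((y - m)⁺ - (y - m)⁻) * (y - m)⁺ := by rw [posPart_sub_negPart]
      _ = (y - m)⁺ * (y - m)⁺ := by rw [sub_mul, h₁, sub_zero]
  calc m * (y - m)⁺ ≤ y * (y - m)⁺ := sub_nonneg.1 <| by
        rw [← sub_mul, h₂]
        exact FAlg.mul_nonneg _ _ (posPart_nonneg _) (posPart_nonneg _)
    _ ≤ y * y := mul_le_mul_of_nonneg_left (sup_le (sub_le_self y hm) hy) hy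

end FAlg

namespace DualSetting

section Pairing

variable {A : Type*} [CommRing A] [Lattice A] [Module ℝ A]
  {D : Type*} [AddCommGroup D] [Lattice D] [Module ℝ D]
  {N : Type*} [CommRing N] [Lattice N] [Module ℝ N] (P : DualSetting A D N)

theorem dual_nonneg {d : D} (hd : 0 ≤ d) {x : A} (hx : 0 ≤ x) : 0 ≤ P.dual d x :=
  (P.dual_order d).1 hd x hx

theorem dual_natCast_mul (d : D) (n : ℕ) (x : A) : P.dual d (n * x) = n * P.dual d x := by
  rw [← nsmul_eq_mul, map_nsmul, nsmul_eq_mul]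

theorem bidual_nonneg {F : N} (hF : 0 ≤ F) {h : D} (hh : 0 ≤ h) : 0 ≤ P.bidual F h :=
  (P.bidual_order F).1 hF h hh

theorem nsmul_eq_self_of_bidual_eq_dual_one {E : N} (hE : ∀ h : D, P.bidual E h = P.dual h 1)
    (f : D) : P.nsmul E f = f :=
  P.dual_inj <| LinearMap.ext fun a => by rw [P.nsmul_eval, hE, P.dsmul_eval, mul_one]

section

variable [RieszSp D]

theorem le_of_dual_le {d e : D} (h : ∀ x, 0 ≤ x → P.dual d x ≤ P.dual e x) : d ≤ e :=
  sub_nonneg.1 <| (P.dual_order _).2 fun x hx => by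
    simpa only [map_sub, LinearMap.sub_apply, sub_nonneg] using h x hx

theorem dual_mono_left {d e : D} (h : d ≤ e) {x : A} (hx : 0 ≤ x) :
    P.dual d x ≤ P.dual e x := by
  simpa only [map_sub, LinearMap.sub_apply, sub_nonneg] using P.dual_nonneg (sub_nonneg.2 h) hx

theorem abs_dual_le (d : D) {x : A} (hx : 0 ≤ x) : |P.dual d x| ≤ P.dual |d| x :=
  abs_le'.2 ⟨P.dual_mono_left (le_abs_self d) hx, by
    simpa only [map_neg, LinearMap.neg_apply] using P.dual_mono_left (neg_le_abs d) hx⟩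

theorem abs_le_of_abs_dual_le {d e : D} (h : ∀ x, 0 ≤ x → |P.dual d x| ≤ P.dual e x) : |d| ≤ e :=
  abs_le'.2 ⟨P.le_of_dual_le fun x hx => (le_abs_self _).trans (h x hx),
    P.le_of_dual_le fun x hx => by
      simpa only [map_neg, LinearMap.neg_apply] using (neg_le_abs _).trans (h x hx)⟩

theorem bidual_monotone {F : N} (hF : 0 ≤ F) : Monotone (P.bidual F) :=
  (monotone_iff_map_nonneg _).2 fun _ hh => P.bidual_nonneg hF hh

end

section

variable [RieszSp N]

theorem abs_bidual_le_of_nonneg (F : N) {h : D} (hh : 0 ≤ h) : |P.bidual F h| ≤ P.bidual |F| h :=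
  abs_le'.2
    ⟨by simpa only [map_sub, LinearMap.sub_apply, sub_nonneg]
        using P.bidual_nonneg (sub_nonneg.2 (le_abs_self F)) hh,
      by simpa only [map_sub, map_neg, LinearMap.sub_apply, LinearMap.neg_apply, sub_nonneg]
        using P.bidual_nonneg (sub_nonneg.2 (neg_le_abs F)) hh⟩

variable [RieszSp D]

theorem abs_bidual_le (F : N) (h : D) : |P.bidual F h| ≤ P.bidual |F| |h| := by
  rw [← posPart_add_negPart h, map_add]
  conv_lhs => rw [← posPart_sub_negPart h, map_sub]
  exact (abs_sub _ _).trans (add_le_add (P.abs_bidual_le_of_nonneg F (posPart_nonneg h))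
    (P.abs_bidual_le_of_nonneg F (negPart_nonneg h)))

end

section

variable [RieszSp A]

theorem dual_monotone {d : D} (hd : 0 ≤ d) : Monotone (P.dual d) :=
  (monotone_iff_map_nonneg _).2 fun _ hx => P.dual_nonneg hd hx

theorem exists_dual_eq_of_additive (p : A → ℝ)
    (hadd : ∀ x y, 0 ≤ x → 0 ≤ y → p (x + y) = p x + p y) (hpos : ∀ x, 0 ≤ x → 0 ≤ p x) :
    ∃ d : D, ∀ x, 0 ≤ x → P.dual d x = p x := by
  obtain ⟨φ, hφ, hφp⟩ := exists_monotone_linearMap_eq_of_additive p hadd hpos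
  obtain ⟨d, rfl⟩ := P.dual_surj φ (orderBddFn_of_monotone hφ)
  exact ⟨d, hφp⟩

variable [RieszSp D]

theorem eq_zero_of_additive_of_le_of_isGLB (p : A → ℝ)
    (hadd : ∀ x y, 0 ≤ x → 0 ≤ y → p (x + y) = p x + p y) (hpos : ∀ x, 0 ≤ x → 0 ≤ p x)
    {S : Set D} (hS : IsGLB S 0) (hle : ∀ d ∈ S, ∀ x, 0 ≤ x → p x ≤ P.dual d x)
    {x : A} (hx : 0 ≤ x) : p x = 0 := by
  obtain ⟨e, he⟩ := P.exists_dual_eq_of_additive p hadd hpos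
  have hlb : e ∈ lowerBounds S := fun d hd =>
    P.le_of_dual_le fun y hy => (he y hy).trans_le (hle d hd y hy)
  refine le_antisymm ?_ (hpos x hx)
  simpa [he x hx] using P.dual_mono_left (hS.2 hlb) hx

/-- Riesz–Kantorovich: `(u ⊓ v)(a) = inf {u c + v (a - c) : 0 ≤ c ≤ a}`, here for `u ⊓ v = 0`. -/
theorem exists_dual_add_dual_sub_lt {u v : D} (hu : 0 ≤ u) (hv : 0 ≤ v) (huv : u ⊓ v = 0)
    {a : A} (ha : 0 ≤ a) {ε : ℝ} (hε : 0 < ε) :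
    ∃ c, 0 ≤ c ∧ c ≤ a ∧ P.dual u c + P.dual v (a - c) < ε := by
  let val (x c : A) : ℝ := P.dual u c + P.dual v (x - c)
  let p (x : A) : ℝ := ⨅ c : Set.Icc 0 x, val x c
  have hval_nonneg {x c : A} (hc : c ∈ Set.Icc 0 x) : 0 ≤ val x c :=
    add_nonneg (P.dual_nonneg hu hc.1) (P.dual_nonneg hv (sub_nonneg.2 hc.2))
  have hbdd (x : A) : BddBelow (Set.range fun c : Set.Icc 0 x => val x c) :=
    ⟨0, by rintro _ ⟨c, rfl⟩; exact hval_nonneg c.2⟩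
  have hp_le {x c : A} (hc : c ∈ Set.Icc 0 x) : p x ≤ val x c := ciInf_le (hbdd x) ⟨c, hc⟩
  have hne {x : A} (hx : 0 ≤ x) : Nonempty (Set.Icc 0 x) := ⟨⟨0, le_rfl, hx⟩⟩
  have hp_nonneg (x : A) (hx : 0 ≤ x) : 0 ≤ p x :=
    have := hne hx
    le_ciInf fun c => hval_nonneg c.2
  have hadd (x y : A) (hx : 0 ≤ x) (hy : 0 ≤ y) : p (x + y) = p x + p y := by
    have := hne hx
    have := hne hy
    have := hne (add_nonneg hx hy)
    refine le_antisymm (le_ciInf_add_ciInf fun c₁ c₂ => ?_) (le_ciInf fun c => ?_)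
    · calc p (x + y) ≤ val (x + y) (c₁ + c₂) :=
            hp_le ⟨add_nonneg c₁.2.1 c₂.2.1, add_le_add c₁.2.2 c₂.2.2⟩
        _ = val x c₁ + val y c₂ := by simp only [val, map_add, map_sub]; ring
    · -- Riesz decomposition: `c = c ⊓ x + (c - x)⁺` with `(c - x)⁺ ≤ y`.
      have h₁ : c.1 ⊓ x ∈ Set.Icc 0 x := ⟨le_inf c.2.1 hx, inf_le_right⟩
      have h₂ : (c.1 - x)⁺ ∈ Set.Icc 0 y :=
        ⟨posPart_nonneg _, sup_le (sub_le_iff_le_add'.2 c.2.2) hy⟩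
      calc p x + p y ≤ val x (c.1 ⊓ x) + val y (c.1 - x)⁺ := add_le_add (hp_le h₁) (hp_le h₂)
        _ = val (x + y) c := by
          simp only [val, inf_eq_sub_posPart_sub, map_add, map_sub]; ring
  have hpa : p a = 0 := P.eq_zero_of_additive_of_le_of_isGLB p hadd hp_nonneg
    (huv ▸ isGLB_pair) (by
      rintro d (rfl | rfl) x hx
      · simpa [val] using hp_le ⟨hx, le_rfl⟩
      · simpa [val] using hp_le ⟨le_rfl, hx⟩) ha
  have := hne ha
  obtain ⟨c, hc⟩ := exists_lt_of_ciInf_lt (hpa.trans_lt hε)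
  exact ⟨c, c.2.1, c.2.2, hc⟩

theorem ordContFn_dual_flip {x : A} (hx : 0 ≤ x) : OrdContFn (P.dual.flip x) := by
  intro s hs hdir hglb ε hε
  have : Nonempty s := hs.to_subtype
  let q (y : A) : ℝ := ⨅ d : s, P.dual d y
  have hq_le {y : A} (hy : 0 ≤ y) {d : D} (hd : d ∈ s) : q y ≤ P.dual d y :=
    ciInf_le (f := fun d : s => P.dual d y)
      ⟨0, by rintro _ ⟨d, rfl⟩; exact P.dual_nonneg (hglb.1 d.2) hy⟩ ⟨d, hd⟩
  have hq_nonneg (y : A) (hy : 0 ≤ y) : 0 ≤ q y := le_ciInf fun d => P.dual_nonneg (hglb.1 d.2) hy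
  have hadd (y z : A) (hy : 0 ≤ y) (hz : 0 ≤ z) : q (y + z) = q y + q z := by
    refine le_antisymm (le_ciInf_add_ciInf fun d₁ d₂ => ?_) (le_ciInf fun d => ?_)
    · obtain ⟨d₃, hd₃, h₁, h₂⟩ := hdir d₁ d₁.2 d₂ d₂.2
      calc q (y + z) ≤ P.dual d₃ (y + z) := hq_le (add_nonneg hy hz) hd₃
        _ = P.dual d₃ y + P.dual d₃ z := map_add _ _ _
        _ ≤ P.dual d₁ y + P.dual d₂ z :=
          add_le_add (P.dual_mono_left h₁ hy) (P.dual_mono_left h₂ hz)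
    · rw [map_add]
      exact add_le_add (hq_le hy d.2) (hq_le hz d.2)
  have hqx : q x = 0 :=
    P.eq_zero_of_additive_of_le_of_isGLB q hadd hq_nonneg hglb (fun d hd y hy => hq_le hy hd) hx
  obtain ⟨⟨d, hd⟩, hdε⟩ := exists_lt_of_ciInf_lt (hqx.trans_lt hε)
  refine ⟨d, hd, fun d' hd' hle => ?_⟩
  rw [LinearMap.flip_apply, abs_of_nonneg (P.dual_nonneg (hglb.1 hd') hx)]
  exact (P.dual_mono_left hle hx).trans_lt hdε

theorem exists_bidual_eq_dual_apply {x : A} (hx : 0 ≤ x) :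
    ∃ E : N, ∀ h : D, P.bidual E h = P.dual h x := by
  obtain ⟨E, hE⟩ := P.bidual_surj (P.dual.flip x)
    (orderBddFn_of_monotone fun _ _ h => P.dual_mono_left h hx) (P.ordContFn_dual_flip hx)
  exact ⟨E, fun h => by rw [hE, LinearMap.flip_apply]⟩

end

end Pairing

section Actions

variable {A : Type*} [CommRing A] [Lattice A] [Module ℝ A] [FAlg A]
  {D : Type*} [AddCommGroup D] [Lattice D] [Module ℝ D]
  {N : Type*} [CommRing N] [Lattice N] [Module ℝ N] (P : DualSetting A D N)

theorem dsmul_nonneg {c : A} (hc : 0 ≤ c) {f : D} (hf : 0 ≤ f) : 0 ≤ P.dsmul c f :=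
  (P.dual_order _).2 fun y hy => by
    rw [P.dsmul_eval]
    exact P.dual_nonneg hf (mul_nonneg hc hy)

theorem nsmul_nonneg {F : N} (hF : 0 ≤ F) {f : D} (hf : 0 ≤ f) :
    0 ≤ P.nsmul F f :=
  (P.dual_order _).2 fun a ha => by
    rw [P.nsmul_eval]
    exact P.bidual_nonneg hF (P.dsmul_nonneg ha hf)

variable [RieszSp D]

theorem dsmul_mono_left {b c : A} (h : b ≤ c) {f : D} (hf : 0 ≤ f) : P.dsmul b f ≤ P.dsmul c f :=
  P.le_of_dual_le fun y hy => by
    simp only [P.dsmul_eval]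
    exact P.dual_monotone hf (mul_le_mul_of_nonneg_right h hy)

theorem abs_dsmul_le {a : A} (ha : 0 ≤ a) (f : D) : |P.dsmul a f| ≤ P.dsmul a |f| :=
  P.abs_le_of_abs_dual_le fun y hy => by
    simp only [P.dsmul_eval]
    exact P.abs_dual_le f (mul_nonneg ha hy)

theorem abs_nsmul_le [RieszSp N] (F : N) (f : D) : |P.nsmul F f| ≤ P.nsmul |F| |f| :=
  P.abs_le_of_abs_dual_le fun a ha => by
    rw [P.nsmul_eval, P.nsmul_eval]
    exact (P.abs_bidual_le F _).trans (P.bidual_monotone (abs_nonneg F) (P.abs_dsmul_le ha f))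

/-- Split `(1 + x) a` between `f` and `g` with small cost, and let `w` be the share of `g`;
then `c = (a - w)⁺` satisfies `(1 + x) c ≤` the share of `f`. -/
theorem exists_dual_sub_lt_and_dual_mul_lt {f g : D} (hf : 0 ≤ f) (hg : 0 ≤ g) (hfg : f ⊓ g = 0)
    {a x : A} (ha : 0 ≤ a) (hx : 0 ≤ x) {δ : ℝ} (hδ : 0 < δ) :
    ∃ c, 0 ≤ c ∧ c ≤ a ∧ P.dual g (a - c) < δ ∧ P.dual f (x * c) < δ := by
  have hx₁ : 0 ≤ 1 + x := add_nonneg zero_le_one hx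
  obtain ⟨z, hz, hza, hsum⟩ := P.exists_dual_add_dual_sub_lt hf hg hfg (mul_nonneg hx₁ ha) hδ
  have hf_z : P.dual f z < δ := by linarith [P.dual_nonneg hg (sub_nonneg.2 hza)]
  have hg_w : P.dual g ((1 + x) * a - z) < δ := by linarith [P.dual_nonneg hf hz]
  set w := (1 + x) * a - z
  have hw : 0 ≤ w := sub_nonneg.2 hza
  have hcz : (1 + x) * (a - w)⁺ ≤ z := by
    rw [FAlg.mul_posPart hx₁]
    refine sup_le ?_ hz
    calc (1 + x) * (a - w) = z - x * w := by simp only [w]; ring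
      _ ≤ z := sub_le_self z (mul_nonneg hx hw)
  refine ⟨(a - w)⁺, posPart_nonneg _, sup_le (sub_le_self a hw) ha, ?_, ?_⟩
  · calc P.dual g (a - (a - w)⁺) = P.dual g (a ⊓ w) := by rw [inf_eq_sub_posPart_sub]
      _ ≤ P.dual g w := P.dual_monotone hg inf_le_right
      _ < δ := hg_w
  · calc P.dual f (x * (a - w)⁺) ≤ P.dual f ((1 + x) * (a - w)⁺) :=
          P.dual_monotone hf <| by
            rw [add_mul, one_mul]; exact le_add_of_nonneg_left (posPart_nonneg _)
      _ ≤ P.dual f z := P.dual_monotone hf hcz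
      _ < δ := hf_z

/-- Cut `y` at level `n a`: the part below is controlled by `c`, the part above by `y * y / n`. -/
theorem natCast_mul_dual_le {f e : D} (hf : 0 ≤ f) {a c : A} (hc : 0 ≤ c) (hca : c ≤ a)
    (he : e ≤ P.dsmul c f) {y : A} (hy : 0 ≤ y) (n : ℕ) :
    n * P.dual e y ≤ n * n * P.dual f (c * a) + P.dual f (y * y) := by
  have hm : 0 ≤ (n : A) * a := mul_nonneg (Nat.cast_nonneg n) (hc.trans hca)
  have hlow : P.dual e (y ⊓ (n * a)) ≤ n * P.dual f (c * a) :=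
    calc P.dual e (y ⊓ (n * a)) ≤ P.dual f (c * (y ⊓ (n * a))) := by
          rw [← P.dsmul_eval]; exact P.dual_mono_left he (le_inf hy hm)
      _ ≤ P.dual f (n * (c * a)) := P.dual_monotone hf <| by
          rw [mul_left_comm]; exact mul_le_mul_of_nonneg_left inf_le_right hc
      _ = n * P.dual f (c * a) := P.dual_natCast_mul f n _
  have hhigh : n * P.dual e (y - n * a)⁺ ≤ P.dual f (y * y) :=
    calc n * P.dual e (y - n * a)⁺ ≤ n * P.dual f (a * (y - n * a)⁺) := by
          refine mul_le_mul_of_nonneg_left ?_ (Nat.cast_nonneg n)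
          rw [← P.dsmul_eval]
          exact P.dual_mono_left (he.trans (P.dsmul_mono_left hca hf)) (posPart_nonneg _)
      _ = P.dual f (n * a * (y - n * a)⁺) := by rw [mul_assoc, P.dual_natCast_mul]
      _ ≤ P.dual f (y * y) := P.dual_monotone hf (FAlg.mul_posPart_sub_le_mul_self hm hy)
  have hsplit : P.dual e y = P.dual e (y ⊓ (n * a)) + P.dual e (y - n * a)⁺ := by
    rw [← map_add, inf_eq_sub_posPart_sub, sub_add_cancel]
  rw [hsplit, mul_add]
  nlinarith [mul_le_mul_of_nonneg_left hlow (Nat.cast_nonneg (α := ℝ) n)]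

theorem isGLB_range_dsmul {f : D} (hf : 0 ≤ f) {a : A} {c : ℕ → A} (hc : ∀ k, 0 ≤ c k)
    (hca : ∀ k, c k ≤ a) (hlim : ∀ η > 0, ∃ k, P.dual f (c k * a) < η) :
    IsGLB (Set.range fun k => P.dsmul (c k) f) 0 := by
  refine ⟨?_, fun e he => P.le_of_dual_le fun y hy => ?_⟩
  · rintro _ ⟨k, rfl⟩
    exact P.dsmul_nonneg (hc k) hf
  rw [map_zero, LinearMap.zero_apply]
  by_contra! hey
  have hyy : 0 ≤ P.dual f (y * y) := P.dual_nonneg hf (mul_nonneg hy hy)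
  obtain ⟨n, hn⟩ := exists_nat_gt (2 * P.dual f (y * y) / P.dual e y)
  have hn₀ : (0 : ℝ) < n := lt_of_le_of_lt (by positivity) hn
  obtain ⟨k, hk⟩ := hlim (P.dual e y / (2 * n)) (by positivity)
  have := P.natCast_mul_dual_le hf (hc k) (hca k) (he ⟨k, rfl⟩) hy n
  rw [div_lt_iff₀ hey] at hn
  rw [lt_div_iff₀ (by positivity)] at hk
  nlinarith

/-- `c` is the running infimum of the witnesses of `exists_dual_sub_lt_and_dual_mul_lt` for
`δ / 2 ^ (k + 1)`, so that the errors `g (a - c k)` add up to less than `δ`. -/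
theorem exists_antitone_dual_sub_lt_and_dual_mul_small {f g : D} (hf : 0 ≤ f) (hg : 0 ≤ g)
    (hfg : f ⊓ g = 0) {a : A} (ha : 0 ≤ a) {δ : ℝ} (hδ : 0 < δ) :
    ∃ c : ℕ → A, Antitone c ∧ (∀ k, 0 ≤ c k) ∧ (∀ k, c k ≤ a) ∧
      (∀ k, P.dual g (a - c k) < δ) ∧ ∀ η > 0, ∃ k, P.dual f (c k * a) < η := by
  choose c' hc'₀ hc'a hc'g hc'f using fun k : ℕ =>
    P.exists_dual_sub_lt_and_dual_mul_lt hf hg hfg ha ha (δ := δ / 2 ^ (k + 1)) (by positivity)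
  let s := partialSups fun k => a - c' k
  have hs₀ (k : ℕ) : 0 ≤ s k :=
    (sub_nonneg.2 (hc'a 0)).trans ((le_partialSups _ 0).trans (s.monotone (Nat.zero_le k)))
  have hcc' (k : ℕ) : a - s k ≤ c' k := sub_le_comm.1 (le_partialSups (fun k => a - c' k) k)
  have hg_s (k : ℕ) : P.dual g (s k) ≤ δ - δ / 2 ^ (k + 1) := by
    induction k with
    | zero =>
      have := hc'g 0
      simp only [s, partialSups_zero] at this ⊢
      linarith
    | succ k ih =>
      have hsup : s (k + 1) ≤ s k + (a - c' (k + 1)) := by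
        rw [partialSups_add_one]
        exact sup_le (le_add_of_nonneg_right (sub_nonneg.2 (hc'a _)))
          (le_add_of_nonneg_left (hs₀ k))
      have := (P.dual_monotone hg hsup).trans_eq (map_add _ _ _)
      have := hc'g (k + 1)
      have : δ / 2 ^ (k + 1 + 1) = δ / 2 ^ (k + 1) / 2 := by rw [pow_succ, div_div]
      linarith
  refine ⟨fun k => a - s k, fun i j hij => sub_le_sub_left (s.monotone hij) a,
    fun k => sub_nonneg.2 (partialSups_le _ _ _ fun j _ => sub_le_self a (hc'₀ j)),
    fun k => sub_le_self a (hs₀ k), fun k => ?_, fun η hη => ?_⟩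
  · rw [sub_sub_cancel]
    linarith [hg_s k, show 0 < δ / 2 ^ (k + 1) by positivity]
  · obtain ⟨k, hk⟩ := pow_unbounded_of_one_lt (δ / η) one_lt_two
    refine ⟨k, ?_⟩
    calc P.dual f ((a - s k) * a) ≤ P.dual f (a * c' k) :=
          P.dual_monotone hf (by rw [mul_comm]; exact mul_le_mul_of_nonneg_left (hcc' k) ha)
      _ < δ / 2 ^ (k + 1) := hc'f k
      _ ≤ δ / 2 ^ k :=
          div_le_div_of_nonneg_left hδ.le (by positivity) (pow_le_pow_right₀ one_le_two k.le_succ)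
      _ < η := by rwa [div_lt_iff₀ (by positivity), mul_comm, ← div_lt_iff₀ hη]

theorem exists_dual_sub_lt_and_bidual_dsmul_lt (F : N) {f g : D} (hf : 0 ≤ f) (hg : 0 ≤ g)
    (hfg : f ⊓ g = 0) {a : A} (ha : 0 ≤ a) {δ ε : ℝ} (hδ : 0 < δ) (hε : 0 < ε) :
    ∃ c, 0 ≤ c ∧ c ≤ a ∧ P.dual g (a - c) < δ ∧ P.bidual F (P.dsmul c f) < ε := by
  obtain ⟨c, hanti, hc₀, hca, hgc, hlim⟩ :=
    P.exists_antitone_dual_sub_lt_and_dual_mul_small hf hg hfg ha hδ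
  have hdir : DirectedOn (· ≥ ·) (Set.range fun k => P.dsmul (c k) f) :=
    directedOn_range.2 <| Antitone.directed_ge fun i j hij => P.dsmul_mono_left (hanti hij) hf
  obtain ⟨_, ⟨K, rfl⟩, hK⟩ := P.bidual_cont F _ (Set.range_nonempty _) hdir
    (P.isGLB_range_dsmul hf hc₀ hca hlim) ε hε
  exact ⟨c K, hc₀ K, hca K, hgc K, (le_abs_self _).trans_lt (hK _ ⟨K, rfl⟩ le_rfl)⟩

theorem nsmul_inf_eq_zero {F : N} (hF : 0 ≤ F) {f g : D} (hf : 0 ≤ f) (hg : 0 ≤ g)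
    (hfg : f ⊓ g = 0) : P.nsmul F f ⊓ g = 0 := by
  refine le_antisymm (P.le_of_dual_le fun a ha => ?_) (le_inf (P.nsmul_nonneg hF hf) hg)
  rw [map_zero, LinearMap.zero_apply]
  refine le_of_forall_pos_lt_add fun η hη => ?_
  obtain ⟨c, hc₀, hca, hgc, hFc⟩ :=
    P.exists_dual_sub_lt_and_bidual_dsmul_lt F hf hg hfg ha (half_pos hη) (half_pos hη)
  calc P.dual (P.nsmul F f ⊓ g) a
      = P.dual (P.nsmul F f ⊓ g) c + P.dual (P.nsmul F f ⊓ g) (a - c) := by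
        rw [← map_add, add_sub_cancel]
    _ ≤ P.dual (P.nsmul F f) c + P.dual g (a - c) :=
        add_le_add (P.dual_mono_left inf_le_left hc₀)
          (P.dual_mono_left inf_le_right (sub_nonneg.2 hca))
    _ < 0 + η := by rw [P.nsmul_eval]; linarith

end Actions

end DualSetting

variable {A : Type*} [CommRing A] [Lattice A] [Module ℝ A] [FAlg A]
variable {D : Type*} [AddCommGroup D] [Lattice D] [Module ℝ D] [RieszSp D]
variable {N : Type*} [CommRing N] [Lattice N] [Module ℝ N] [FAlg N]
variable [P : DualSetting A D N]


/-- `R(f) = {F ⋅ f : F ∈ (A^∼)^∼_n}`, the image of `(A^∼)^∼_n` under `T_f`. -/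
def Rset (N : Type*) [CommRing N] [Lattice N] [Module ℝ N] [P : DualSetting A D N]
    (f : D) : Set D := {g : D | ∃ F : N, g = P.nsmul F f}

/-- An operator on `A^∼` is order bounded if it maps order intervals into order intervals. -/
def OrderBddOp (T : D →ₗ[ℝ] D) : Prop :=
  ∀ a b : D, ∃ u v : D, ∀ x : D, a ≤ x → x ≤ b → u ≤ T x ∧ T x ≤ v

/-- A band preserving operator: it preserves disjointness. -/
def BandPreserving (T : D →ₗ[ℝ] D) : Prop :=
  ∀ f g : D, |f| ⊓ |g| = 0 → |T f| ⊓ |g| = 0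

/-- An orthomorphism is an order bounded band preserving operator. -/
def IsOrthomorphism (T : D →ₗ[ℝ] D) : Prop := OrderBddOp T ∧ BandPreserving T

theorem stmt9_general (T : D →ₗ[ℝ] D)
    (hR : ∀ f : D, Rset (A := A) N (T f) ⊆ Rset (A := A) N f) :
    ∀ f g : D, |f| ⊓ |g| = 0 → |T f| ⊓ |g| = 0 := by
  intro f g hfg
  obtain ⟨E, hE⟩ := P.exists_bidual_eq_dual_apply (zero_le_one : (0 : A) ≤ 1)
  obtain ⟨G, hG⟩ := hR f ⟨E, (P.nsmul_eq_self_of_bidual_eq_dual_one hE (T f)).symm⟩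
  have hTf : |T f| ≤ P.nsmul |G| |f| := hG ▸ P.abs_nsmul_le G f
  have hdisj : P.nsmul |G| |f| ⊓ |g| = 0 :=
    P.nsmul_inf_eq_zero (abs_nonneg G) (abs_nonneg f) (abs_nonneg g) hfg
  exact le_antisymm (hdisj ▸ inf_le_inf_right _ hTf) (le_inf (abs_nonneg _) (abs_nonneg g))

/-- With the factorization property, every f-orthomorphism is an orthomorphism. -/
theorem stmt9 (hfact : ∀ a : A, ∃ b c : A, a = b * c) (T : D →ₗ[ℝ] D)
    (hT : OrderBddOp T) (hR : ∀ f : D, Rset (A := A) N (T f) ⊆ Rset (A := A) N f) :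
    ∀ f g : D, |f| ⊓ |g| = 0 → |T f| ⊓ |g| = 0 :=
  stmt9_general T hR
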